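/- Let F, G, H : ℝ → ℝ be smooth functions satisfying, for all ξ ∈ ℝ: 15ξ·F·F′ + 6F² + 10ξ·G′ + 8G + 6F′ = 0; 5ξ·F·G′ + 10ξ·G·F′ + 8F·G + 10ξ·H′ + 12H + 6G′ = 0; and 125ξ³·F′′′ − 90ξ·F·H′ − 180ξ·H·F′ + 750ξ²·F′′ − 180F·H + 830ξ·F′ + 80F − 108H′ = 0. Define, for x > 0 and t ∈ ℝ, ξ = t·x^{−5/3}, u(x,t) = x^{−2/3}·F(ξ), v(x,t) = x^{−4/3}·G(ξ), w(x,t) = x^{−2}·H(ξ). Then (u, v, w) is a solution of (KB) on (0,∞) × ℝ. -/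

import Mathlib

open Real Filter
open scoped ContDiff


/-- Partial derivative with respect to the first (space) variable. -/
noncomputable def pdx (f : ℝ → ℝ → ℝ) (x t : ℝ) : ℝ := deriv (fun y => f y t) x

/-- Partial derivative with respect to the second (time) variable. -/
noncomputable def pdt (f : ℝ → ℝ → ℝ) (x t : ℝ) : ℝ := deriv (fun s => f x s) t

/-- The three-field Kaup–Boussinesq system (KB) holds for `(u,v,w)` at the point `(x,t)`:
`∂ₜu = (3/2)u∂ₓu + ∂ₓv`, `∂ₜv = v∂ₓu + (1/2)u∂ₓv + ∂ₓw`,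
`∂ₜw = −(1/4)∂ₓ³u + w∂ₓu + (1/2)u∂ₓw`. -/
def KBAt (u v w : ℝ → ℝ → ℝ) (x t : ℝ) : Prop :=
  pdt u x t = 3/2 * u x t * pdx u x t + pdx v x t ∧
  pdt v x t = v x t * pdx u x t + 1/2 * u x t * pdx v x t + pdx w x t ∧
  pdt w x t = -(1/4) * pdx (pdx (pdx u)) x t + w x t * pdx u x t
    + 1/2 * u x t * pdx w x t

/-- `f : ℝ × ℝ → ℝ` (curried) is smooth in both variables jointly. -/
def Smooth2 (f : ℝ → ℝ → ℝ) : Prop := ContDiff ℝ (⊤ : ℕ∞) (fun p : ℝ × ℝ => f p.1 p.2)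

/-- The similarity-variable operator: `x∂ₓ` acting on `x^a φ(t x^{-5/3})` produces
`x^{a-1} (Dop a φ)(ξ)`. -/
noncomputable def Dop (a : ℝ) (φ : ℝ → ℝ) : ℝ → ℝ := fun ξ => a * φ ξ - 5/3 * ξ * deriv φ ξ

lemma contDiff_deriv' {φ : ℝ → ℝ} (hφ : ContDiff ℝ ∞ φ) : ContDiff ℝ ∞ (deriv φ) :=
  (contDiff_infty_iff_deriv.mp hφ).2

lemma diff' {φ : ℝ → ℝ} (hφ : ContDiff ℝ ∞ φ) : Differentiable ℝ φ :=
  (contDiff_infty_iff_deriv.mp hφ).1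

lemma contDiff_Dop {φ : ℝ → ℝ} (hφ : ContDiff ℝ ∞ φ) (a : ℝ) : ContDiff ℝ ∞ (Dop a φ) :=
  (contDiff_const.mul hφ).sub ((contDiff_const.mul contDiff_id).mul (contDiff_deriv' hφ))

lemma key (φ : ℝ → ℝ) (hφ : ContDiff ℝ ∞ φ) (a t x : ℝ) (hx : 0 < x) :
    HasDerivAt (fun y : ℝ => y ^ a * φ (t * y ^ ((-5:ℝ)/3)))
      (x ^ (a - 1) * Dop a φ (t * x ^ ((-5:ℝ)/3))) x := by
  have hξ : HasDerivAt (fun y : ℝ => t * y ^ ((-5:ℝ)/3))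
      (t * (((-5:ℝ)/3) * x ^ ((-5:ℝ)/3 - 1))) x :=
    (Real.hasDerivAt_rpow_const (Or.inl hx.ne')).const_mul t
  have hφd : HasDerivAt φ (deriv φ (t * x ^ ((-5:ℝ)/3))) (t * x ^ ((-5:ℝ)/3)) :=
    (diff' hφ _).hasDerivAt
  have hc := hφd.comp x hξ
  have hp : HasDerivAt (fun y : ℝ => y ^ a) (a * x ^ (a - 1)) x :=
    Real.hasDerivAt_rpow_const (Or.inl hx.ne')
  have h3 := hp.mul hc
  refine h3.congr_deriv (Eq.symm ?_)
  have e1 : x ^ a * x ^ ((-5:ℝ)/3 - 1) = x ^ (a-1) * x ^ ((-5:ℝ)/3) := by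
    rw [← Real.rpow_add hx, ← Real.rpow_add hx]; ring_nf
  simp only [Dop, Function.comp]
  linear_combination (5/3 * deriv φ (t * x ^ ((-5:ℝ)/3)) * t) * e1

lemma keyt (φ : ℝ → ℝ) (hφ : ContDiff ℝ ∞ φ) (a t x : ℝ) (hx : 0 < x) :
    HasDerivAt (fun s : ℝ => x ^ a * φ (s * x ^ ((-5:ℝ)/3)))
      (x ^ (a - 5/3) * deriv φ (t * x ^ ((-5:ℝ)/3))) t := by
  have hlin : HasDerivAt (fun s : ℝ => s * x ^ ((-5:ℝ)/3)) (x ^ ((-5:ℝ)/3)) t := by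
    simpa using (hasDerivAt_id t).mul_const (x ^ ((-5:ℝ)/3))
  have h := (((diff' hφ _).hasDerivAt).comp t hlin).const_mul (x ^ a)
  refine h.congr_deriv (Eq.symm ?_)
  rw [show (a - 5/3 : ℝ) = a + (-5)/3 by ring, Real.rpow_add hx]
  ring

lemma deriv_Dop_eq {φ : ℝ → ℝ} (hφ : ContDiff ℝ ∞ φ) (a : ℝ) :
    deriv (Dop a φ) = Dop (a - 5/3) (deriv φ) := by
  funext ξ
  have h1 : HasDerivAt φ (deriv φ ξ) ξ := (diff' hφ _).hasDerivAt
  have h2 : HasDerivAt (deriv φ) (deriv (deriv φ) ξ) ξ :=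
    (diff' (contDiff_deriv' hφ) _).hasDerivAt
  have H := (h1.const_mul a).sub ((((hasDerivAt_id ξ).mul h2)).const_mul (5/3 : ℝ))
  have hfun : Dop a φ = fun s => a * φ s - 5/3 * (id s * deriv φ s) := by
    funext s; simp only [Dop, id]; ring
  rw [hfun, show deriv (fun s => a * φ s - 5/3 * (id s * deriv φ s)) ξ = _ from H.deriv]
  simp only [Dop, id]; ring

lemma rp {x : ℝ} (hx : 0 < x) (e : ℝ) (n : ℕ) (h : e = -(n:ℝ)/3) :
    x ^ e = (x ^ ((-1:ℝ)/3))^n := by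
  subst h
  rw [← Real.rpow_natCast (x ^ ((-1:ℝ)/3)) n, ← Real.rpow_mul hx.le]
  congr 1; ring


/-- If smooth `F, G, H` satisfy the dilation-reduced ODE system, then
`u = x^{−2/3}F(ξ)`, `v = x^{−4/3}G(ξ)`, `w = x^{−2}H(ξ)` with `ξ = t·x^{−5/3}`
solve the three-field Kaup–Boussinesq system on `(0,∞) × ℝ`. -/
theorem stmt_11 (F G H : ℝ → ℝ)
    (hF : ContDiff ℝ (⊤ : ℕ∞) F) (hG : ContDiff ℝ (⊤ : ℕ∞) G) (hH : ContDiff ℝ (⊤ : ℕ∞) H)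
    (h1 : ∀ ξ : ℝ, 15 * ξ * F ξ * deriv F ξ + 6 * (F ξ)^2 + 10 * ξ * deriv G ξ
      + 8 * G ξ + 6 * deriv F ξ = 0)
    (h2 : ∀ ξ : ℝ, 5 * ξ * F ξ * deriv G ξ + 10 * ξ * G ξ * deriv F ξ
      + 8 * F ξ * G ξ + 10 * ξ * deriv H ξ + 12 * H ξ + 6 * deriv G ξ = 0)
    (h3 : ∀ ξ : ℝ, 125 * ξ^3 * deriv^[3] F ξ - 90 * ξ * F ξ * deriv H ξ
      - 180 * ξ * H ξ * deriv F ξ + 750 * ξ^2 * deriv^[2] F ξ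
      - 180 * F ξ * H ξ + 830 * ξ * deriv F ξ + 80 * F ξ - 108 * deriv H ξ = 0) :
    ∀ x t : ℝ, 0 < x →
      KBAt (fun x t => x ^ ((-2 : ℝ)/3) * F (t * x ^ ((-5 : ℝ)/3)))
        (fun x t => x ^ ((-4 : ℝ)/3) * G (t * x ^ ((-5 : ℝ)/3)))
        (fun x t => x ^ (-2 : ℝ) * H (t * x ^ ((-5 : ℝ)/3))) x t := by
  intro x t hx
  have hF' : ContDiff ℝ ∞ F := hF.of_le (by simp)
  have hG' : ContDiff ℝ ∞ G := hG.of_le (by simp)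
  have hH' : ContDiff ℝ ∞ H := hH.of_le (by simp)
  have h3' : ∀ ξ : ℝ, 125 * ξ^3 * deriv (deriv (deriv F)) ξ - 90 * ξ * F ξ * deriv H ξ
      - 180 * ξ * H ξ * deriv F ξ + 750 * ξ^2 * deriv (deriv F) ξ
      - 180 * F ξ * H ξ + 830 * ξ * deriv F ξ + 80 * F ξ - 108 * deriv H ξ = 0 := h3
  set u : ℝ → ℝ → ℝ := fun x t => x ^ ((-2 : ℝ)/3) * F (t * x ^ ((-5 : ℝ)/3)) with hu
  set v : ℝ → ℝ → ℝ := fun x t => x ^ ((-4 : ℝ)/3) * G (t * x ^ ((-5 : ℝ)/3)) with hv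
  set w : ℝ → ℝ → ℝ := fun x t => x ^ (-2 : ℝ) * H (t * x ^ ((-5 : ℝ)/3)) with hw
  have hF1 : ContDiff ℝ ∞ (Dop ((-2:ℝ)/3) F) := contDiff_Dop hF' _
  have hF2 : ContDiff ℝ ∞ (Dop ((-2:ℝ)/3 - 1) (Dop ((-2:ℝ)/3) F)) := contDiff_Dop hF1 _
  -- first x-derivatives, valid on (0,∞)
  have hux : ∀ y : ℝ, 0 < y →
      pdx u y t = y ^ ((-2:ℝ)/3 - 1) * Dop ((-2:ℝ)/3) F (t * y ^ ((-5:ℝ)/3)) :=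
    fun y hy => (key F hF' _ t y hy).deriv
  have hvx : pdx v x t = x ^ ((-4:ℝ)/3 - 1) * Dop ((-4:ℝ)/3) G (t * x ^ ((-5:ℝ)/3)) :=
    (key G hG' _ t x hx).deriv
  have hwx : pdx w x t = x ^ ((-2:ℝ) - 1) * Dop (-2:ℝ) H (t * x ^ ((-5:ℝ)/3)) :=
    (key H hH' _ t x hx).deriv
  -- second x-derivative of u
  have hux2 : ∀ y : ℝ, 0 < y →
      pdx (pdx u) y t = y ^ ((-2:ℝ)/3 - 1 - 1) *
        Dop ((-2:ℝ)/3 - 1) (Dop ((-2:ℝ)/3) F) (t * y ^ ((-5:ℝ)/3)) := by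
    intro y hy
    have hev : (fun z => pdx u z t) =ᶠ[nhds y]
        (fun z => z ^ ((-2:ℝ)/3 - 1) * Dop ((-2:ℝ)/3) F (t * z ^ ((-5:ℝ)/3))) := by
      filter_upwards [Ioi_mem_nhds hy] with z hz using hux z hz
    show deriv (fun z => pdx u z t) y = _
    rw [hev.deriv_eq]
    exact (key _ hF1 _ t y hy).deriv
  -- third x-derivative of u
  have hux3 : pdx (pdx (pdx u)) x t = x ^ ((-2:ℝ)/3 - 1 - 1 - 1) *
      Dop ((-2:ℝ)/3 - 1 - 1) (Dop ((-2:ℝ)/3 - 1) (Dop ((-2:ℝ)/3) F)) (t * x ^ ((-5:ℝ)/3)) := by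
    have hev : (fun z => pdx (pdx u) z t) =ᶠ[nhds x]
        (fun z => z ^ ((-2:ℝ)/3 - 1 - 1) *
          Dop ((-2:ℝ)/3 - 1) (Dop ((-2:ℝ)/3) F) (t * z ^ ((-5:ℝ)/3))) := by
      filter_upwards [Ioi_mem_nhds hx] with z hz using hux2 z hz
    show deriv (fun z => pdx (pdx u) z t) x = _
    rw [hev.deriv_eq]
    exact (key _ hF2 _ t x hx).deriv
  -- t-derivatives
  have hut : pdt u x t = x ^ ((-2:ℝ)/3 - 5/3) * deriv F (t * x ^ ((-5:ℝ)/3)) :=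
    (keyt F hF' _ t x hx).deriv
  have hvt : pdt v x t = x ^ ((-4:ℝ)/3 - 5/3) * deriv G (t * x ^ ((-5:ℝ)/3)) :=
    (keyt G hG' _ t x hx).deriv
  have hwt : pdt w x t = x ^ ((-2:ℝ) - 5/3) * deriv H (t * x ^ ((-5:ℝ)/3)) :=
    (keyt H hH' _ t x hx).deriv
  -- derivatives of the Dop-reduced profiles
  have dA : deriv (Dop ((-2:ℝ)/3) F) = Dop ((-2:ℝ)/3 - 5/3) (deriv F) := deriv_Dop_eq hF' _
  have dB : deriv (Dop ((-2:ℝ)/3 - 1) (Dop ((-2:ℝ)/3) F))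
      = Dop ((-2:ℝ)/3 - 1 - 5/3) (deriv (Dop ((-2:ℝ)/3) F)) := deriv_Dop_eq hF1 _
  have dC : deriv (Dop ((-2:ℝ)/3 - 5/3) (deriv F))
      = Dop ((-2:ℝ)/3 - 5/3 - 5/3) (deriv (deriv F)) := deriv_Dop_eq (contDiff_deriv' hF') _
  have dop_apply : ∀ (a : ℝ) (φ : ℝ → ℝ) (s : ℝ),
      Dop a φ s = a * φ s - 5/3 * s * deriv φ s := fun _ _ _ => rfl
  refine ⟨?_, ?_, ?_⟩
  · rw [hut, hvx, hux x hx]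
    simp only [hu, hv, dop_apply, dA]
    rw [rp hx ((-2:ℝ)/3 - 5/3) 7 (by norm_num), rp hx ((-2:ℝ)/3 - 1) 5 (by norm_num),
      rp hx ((-4:ℝ)/3 - 1) 7 (by norm_num), rp hx ((-2:ℝ)/3) 2 (by norm_num),
      rp hx ((-5:ℝ)/3) 5 (by norm_num)]
    linear_combination (1/6 * (x ^ ((-1:ℝ)/3))^7) * h1 (t * (x ^ ((-1:ℝ)/3))^5)
  · rw [hvt, hux x hx, hvx, hwx]
    simp only [hu, hv, hw, dop_apply]
    rw [rp hx ((-4:ℝ)/3 - 5/3) 9 (by norm_num), rp hx ((-2:ℝ)/3 - 1) 5 (by norm_num),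
      rp hx ((-4:ℝ)/3 - 1) 7 (by norm_num), rp hx ((-2:ℝ) - 1) 9 (by norm_num),
      rp hx ((-2:ℝ)/3) 2 (by norm_num), rp hx ((-4:ℝ)/3) 4 (by norm_num),
      rp hx ((-5:ℝ)/3) 5 (by norm_num)]
    linear_combination (1/6 * (x ^ ((-1:ℝ)/3))^9) * h2 (t * (x ^ ((-1:ℝ)/3))^5)
  · rw [hwt, hux3, hux x hx, hwx]
    simp only [hu, hw, dop_apply, dB, dA, dC]
    rw [rp hx ((-2:ℝ) - 5/3) 11 (by norm_num), rp hx ((-2:ℝ)/3 - 1 - 1 - 1) 11 (by norm_num),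
      rp hx ((-2:ℝ)/3 - 1) 5 (by norm_num), rp hx ((-2:ℝ) - 1) 9 (by norm_num),
      rp hx ((-2:ℝ)/3) 2 (by norm_num), rp hx (-2:ℝ) 6 (by norm_num),
      rp hx ((-5:ℝ)/3) 5 (by norm_num)]
    linear_combination (-1/108 * (x ^ ((-1:ℝ)/3))^11) * h3' (t * (x ^ ((-1:ℝ)/3))^5)
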